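/- Let T be a quantum operation from operators on (ℂ²)^{⊗N} to operators on (ℂ²)^{⊗N'} that decomposes as a tensor product T = ⊗_{ν=1}^{w} T_ν with respect to partitions [N] = K_1 ∪ … ∪ K_w and [N'] = L_1 ∪ … ∪ L_w into disjoint blocks, where each T_ν is a quantum operation from operators on (ℂ²)^{⊗|K_ν|} to operators on (ℂ²)^{⊗|L_ν|}. Let A ⊆ [N'], let Γ = {ν : L_ν ∩ A ≠ ∅}, and let B = ∪_{ν∈Γ} K_ν. Then for all density matrices ρ, σ on N qubits, D(T(ρ)|_A, T(σ)|_A) ≤ D(ρ|_B, σ|_B). -/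

import Mathlib

open scoped ComplexOrder

noncomputable section

/-- The state space of `n` qubits: linear operators on `(ℂ²)^{⊗ n}`,
represented as matrices indexed by `Fin n → Fin 2`. -/
abbrev QState (n : ℕ) := Matrix (Fin n → Fin 2) (Fin n → Fin 2) ℂ

/-- A density matrix: Hermitian (implied), positive semidefinite, trace one. -/
def IsDensityMatrix {α : Type*} [Fintype α] (ρ : Matrix α α ℂ) : Prop :=
  ρ.PosSemidef ∧ ρ.trace = 1

/-- The trace norm of a matrix: `tr √(Aᴴ A)`, the sum of the singular values. -/
noncomputable def traceNorm {α : Type*} [Fintype α] [DecidableEq α] (A : Matrix α α ℂ) : ℝ :=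
  ((Matrix.posSemidef_conjTranspose_mul_self A).1.cfc Real.sqrt).trace.re

/-- The trace distance `D(ρ,σ) = ‖ρ - σ‖_tr / 2`. -/
noncomputable def traceDist {α : Type*} [Fintype α] [DecidableEq α] (ρ σ : Matrix α α ℂ) : ℝ :=
  traceNorm (ρ - σ) / 2

/-- The extension `T ⊗ id_γ` of a linear map on matrices, acting blockwise. -/
def tensorIdMap {α β γ : Type*} (T : Matrix α α ℂ →ₗ[ℂ] Matrix β β ℂ)
    (M : Matrix (α × γ) (α × γ) ℂ) : Matrix (β × γ) (β × γ) ℂ :=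
  Matrix.of fun p q => T (Matrix.of fun a a' => M (a, p.2) (a', q.2)) p.1 q.1

/-- Complete positivity: all the extensions `T ⊗ id_m` preserve positive semidefiniteness. -/
def IsCompletelyPositive {α β : Type*} [Fintype α] [Fintype β]
    (T : Matrix α α ℂ →ₗ[ℂ] Matrix β β ℂ) : Prop :=
  ∀ (m : ℕ) (M : Matrix (α × Fin m) (α × Fin m) ℂ),
    M.PosSemidef → (tensorIdMap T M).PosSemidef

/-- A quantum operation: a trace-preserving, completely positive linear map. -/
def IsQuantumOp {α β : Type*} [Fintype α] [Fintype β]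
    (T : Matrix α α ℂ →ₗ[ℂ] Matrix β β ℂ) : Prop :=
  (∀ M, (T M).trace = M.trace) ∧ IsCompletelyPositive T

/-- The depolarizing channel at rate `η` on `d × d` matrices:
`ρ ↦ (1-η) ρ + (η tr ρ / dim) I`. -/
noncomputable def depolarize (η : ℝ) (d : Type*) [Fintype d] [DecidableEq d] :
    Matrix d d ℂ →ₗ[ℂ] Matrix d d ℂ :=
  (1 - η : ℂ) • LinearMap.id +
    (Matrix.traceLinearMap d ℂ ℂ).smulRight (((η : ℂ) / (Fintype.card d : ℂ)) • (1 : Matrix d d ℂ))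

/-- Depolarization at rate `η` of the single qubit `i` of an `n`-qubit system. -/
noncomputable def depolarizeAt (η : ℝ) {n : ℕ} (i : Fin n) : QState n →ₗ[ℂ] QState n where
  toFun ρ := Matrix.of fun x y =>
    (1 - η : ℂ) * ρ x y +
      (η : ℂ) * (if x i = y i then
        (2 : ℂ)⁻¹ * ∑ b : Fin 2, ρ (Function.update x i b) (Function.update y i b) else 0)
  map_add' ρ σ := by
    ext x y
    simp only [Matrix.of_apply, Matrix.add_apply]
    split
    · rw [Finset.sum_add_distrib]; ring
    · ring
  map_smul' c ρ := by
    ext x y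
    simp only [Matrix.of_apply, Matrix.smul_apply, smul_eq_mul, RingHom.id_apply]
    split
    · rw [← Finset.mul_sum]; ring
    · ring

/-- `E_η^{⊗n}`: independent depolarization at rate `η` of each of the `n` qubits. -/
noncomputable def depolarizeN (η : ℝ) (n : ℕ) : QState n →ₗ[ℂ] QState n :=
  (List.finRange n).foldr (fun i acc => depolarizeAt η i ∘ₗ acc) LinearMap.id

/-- `glue A x z` is the bit string on `n` qubits equal to `x` on `A` and `z` outside `A`. -/
def glue {n : ℕ} (A : Finset (Fin n)) (x : A → Fin 2) (z : {i : Fin n // i ∉ A} → Fin 2) :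
    Fin n → Fin 2 :=
  fun i => if h : i ∈ A then x ⟨i, h⟩ else z ⟨i, h⟩

/-- `ptr A ρ = ρ|_A`: the partial trace of an `n`-qubit state over all the qubits outside `A`. -/
noncomputable def ptr {n : ℕ} (A : Finset (Fin n)) (ρ : QState n) :
    Matrix (A → Fin 2) (A → Fin 2) ℂ :=
  Matrix.of fun x y => ∑ z : ({i : Fin n // i ∉ A} → Fin 2), ρ (glue A x z) (glue A y z)

/-- Given a partition of the qubits `[N]` into the fibers of `f : Fin N → Fin w` and matrices
`M ν` on the blocks, `assemble f M` is the tensor product matrix `⊗_ν M ν` on all `N` qubits. -/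
def assemble {N w : ℕ} (f : Fin N → Fin w)
    (M : ∀ ν : Fin w,
      Matrix ({i : Fin N // f i = ν} → Fin 2) ({i : Fin N // f i = ν} → Fin 2) ℂ) :
    QState N :=
  Matrix.of fun x y => ∏ ν : Fin w, M ν (fun j => x j.1) (fun j => y j.1)

/-- `T` decomposes as the tensor product `⊗_ν Tb ν` of quantum gates of fan-in `≤ k`, with
respect to the partitions of the input qubits `[N]` into the fibers `K_ν` of `f` and of the
output qubits `[N']` into the fibers `L_ν` of `g`. -/
def IsGateDecomp {N N' w : ℕ} (k : ℕ) (T : QState N →ₗ[ℂ] QState N')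
    (f : Fin N → Fin w) (g : Fin N' → Fin w)
    (Tb : ∀ ν : Fin w,
      Matrix ({i : Fin N // f i = ν} → Fin 2) ({i : Fin N // f i = ν} → Fin 2) ℂ →ₗ[ℂ]
        Matrix ({i : Fin N' // g i = ν} → Fin 2) ({i : Fin N' // g i = ν} → Fin 2) ℂ) : Prop :=
  (∀ ν, IsQuantumOp (Tb ν)) ∧
  (∀ ν : Fin w, Fintype.card {i : Fin N // f i = ν} ≤ k) ∧
  (∀ M, T (assemble f M) = assemble g fun ν => Tb ν (M ν))

/-- A quantum circuit over the gate set `G_k` of all quantum gates of fan-in `≤ k`: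
a sequence of `depth` levels, with `nq i` qubits at level `i`, where each level operation
decomposes as a tensor product of quantum gates of fan-in `≤ k`. -/
structure QCircuit (k : ℕ) where
  depth : ℕ
  nq : Fin (depth + 1) → ℕ
  op : ∀ i : Fin depth, QState (nq i.castSucc) →ₗ[ℂ] QState (nq i.succ)
  isGate : ∀ i : Fin depth, ∃ (w : ℕ) (f : Fin (nq i.castSucc) → Fin w)
    (g : Fin (nq i.succ) → Fin w)
    (Tb : ∀ ν : Fin w,
      Matrix ({j : Fin (nq i.castSucc) // f j = ν} → Fin 2)
          ({j : Fin (nq i.castSucc) // f j = ν} → Fin 2) ℂ →ₗ[ℂ]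
        Matrix ({j : Fin (nq i.succ) // g j = ν} → Fin 2)
          ({j : Fin (nq i.succ) // g j = ν} → Fin 2) ℂ),
    IsGateDecomp k (op i) f g Tb

/-- The width of a circuit: the maximum number of qubits at any level. -/
def QCircuit.width {k : ℕ} (Q : QCircuit k) : ℕ := Finset.univ.sup Q.nq

/-- The first `i` levels of the perturbed circuit `Q_η`: the gates `T_0, …, T_{i-1}` interlaced
with depolarizing noise at rate `η` on every qubit between consecutive gates. -/
noncomputable def QCircuit.runP {k : ℕ} (Q : QCircuit k) (η : ℝ) :
    (i : ℕ) → (h : i ≤ Q.depth) →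
      (QState (Q.nq ⟨0, Nat.succ_pos _⟩) →ₗ[ℂ] QState (Q.nq ⟨i, Nat.lt_succ_of_le h⟩))
  | 0, _ => LinearMap.id
  | (i + 1), h =>
      Q.op ⟨i, h⟩ ∘ₗ
        (if i = 0 then LinearMap.id
          else depolarizeN η (Q.nq ⟨i, Nat.lt_succ_of_le (Nat.le_of_succ_le h)⟩)) ∘ₗ
        Q.runP η i (Nat.le_of_succ_le h)

/-- The perturbed circuit `Q_η = T_{t-1} ∘ E_η^{⊗n_{t-1}} ∘ ⋯ ∘ E_η^{⊗n_1} ∘ T_0`. -/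
noncomputable def QCircuit.perturbed {k : ℕ} (Q : QCircuit k) (η : ℝ) :
    QState (Q.nq ⟨0, Nat.succ_pos _⟩) →ₗ[ℂ] QState (Q.nq (Fin.last Q.depth)) :=
  Q.runP η Q.depth le_rfl

end

/-! A block `T_ν` none of whose outputs lies in `A` is traced out completely after it acts, and
since it preserves traces it might as well have traced out its inputs. Hence `ptr_A ∘ T` only
depends on `ptr_B`: `ptr_A (T X) = Φ (ptr_B X)` with `Φ = ptr_A ∘ T ∘ (· ⊗ 𝟙/d)`. The map `Φ` is
trace preserving and positive, because the Choi matrix of `T` is a Hadamard product of the positive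
Choi matrices of the `T_ν`. Positive trace-preserving maps contract the trace norm of Hermitian
matrices: split `H = P - Q` with `‖H‖₁ = tr P + tr Q`, then `Φ H = Φ P - Φ Q` and
`‖Φ P - Φ Q‖₁ ≤ tr Φ P + tr Φ Q`. -/

open Matrix

namespace Matrix.IsHermitian

variable {α : Type*} [Fintype α] [DecidableEq α] {H : Matrix α α ℂ} (hH : H.IsHermitian)
include hH

lemma cfc_eq_mul_diagonal_mul (f : ℝ → ℝ) :
    hH.cfc f = (hH.eigenvectorUnitary : Matrix α α ℂ) *
      diagonal (RCLike.ofReal ∘ f ∘ hH.eigenvalues) * (hH.eigenvectorUnitary : Matrix α α ℂ)ᴴ :=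
  Unitary.conjStarAlgAut_apply _ _

lemma trace_cfc (f : ℝ → ℝ) : (hH.cfc f).trace = ∑ i, (f (hH.eigenvalues i) : ℂ) := by
  rw [cfc_eq_mul_diagonal_mul, trace_mul_cycle, ← star_eq_conjTranspose,
    Unitary.star_mul_self_of_mem hH.eigenvectorUnitary.2, one_mul, trace_diagonal]
  rfl

lemma posSemidef_cfc {f : ℝ → ℝ} (hf : ∀ x, 0 ≤ f x) : (hH.cfc f).PosSemidef := by
  rw [cfc_eq_mul_diagonal_mul]
  refine (PosSemidef.diagonal fun i => ?_).mul_mul_conjTranspose_same _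
  simpa using hf _

end Matrix.IsHermitian

section TraceNorm

variable {α β : Type*} [Fintype α] [DecidableEq α] [Fintype β] [DecidableEq β]

lemma traceNorm_eq_sum_abs_eigenvalues {H : Matrix α α ℂ} (hH : H.IsHermitian) :
    traceNorm H = ∑ i, |hH.eigenvalues i| := by
  have hsq : Hᴴ * H = cfc (fun x : ℝ => x ^ 2) H := by
    rw [cfc_pow_id H 2 hH.isSelfAdjoint, hH.eq, sq]
  have habs : (posSemidef_conjTranspose_mul_self H).1.cfc Real.sqrt = hH.cfc (fun x => |x|) := by
    rw [← IsHermitian.cfc_eq, ← IsHermitian.cfc_eq, hsq, ← cfc_comp Real.sqrt _ H]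
    congr 1
    funext x
    exact Real.sqrt_sq_eq_abs x
  rw [traceNorm, habs, hH.trace_cfc, ← Complex.ofReal_sum, Complex.ofReal_re]

lemma Matrix.IsHermitian.exists_posSemidef_sub_eq_traceNorm {H : Matrix α α ℂ}
    (hH : H.IsHermitian) :
    ∃ P Q : Matrix α α ℂ, P.PosSemidef ∧ Q.PosSemidef ∧ H = P - Q ∧
      traceNorm H = P.trace.re + Q.trace.re := by
  refine ⟨hH.cfc fun x => max x 0, hH.cfc fun x => max (-x) 0,
    hH.posSemidef_cfc fun _ => le_max_right _ _, hH.posSemidef_cfc fun _ => le_max_right _ _,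
    ?_, ?_⟩
  · rw [← IsHermitian.cfc_eq, ← IsHermitian.cfc_eq,
      ← cfc_sub (fun x => max x 0) (fun x => max (-x) 0) H]
    simp_rw [max_zero_sub_max_neg_zero_eq_self]
    exact (cfc_id' ℝ H).symm
  · simp only [traceNorm_eq_sum_abs_eigenvalues hH, IsHermitian.trace_cfc, ← Complex.ofReal_sum,
      Complex.ofReal_re, ← Finset.sum_add_distrib, max_zero_add_max_neg_zero_eq_abs_self]

/-- In the eigenbasis of `H`, each `|λᵢ| = |Pᵢᵢ - Qᵢᵢ|` is at most the nonnegative `Pᵢᵢ + Qᵢᵢ`. -/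
lemma traceNorm_le_trace_add_trace {H P Q : Matrix α α ℂ} (hH : H.IsHermitian)
    (hP : P.PosSemidef) (hQ : Q.PosSemidef) (hPQ : H = P - Q) :
    traceNorm H ≤ P.trace.re + Q.trace.re := by
  set U : Matrix α α ℂ := (hH.eigenvectorUnitary : Matrix α α ℂ)
  have hUU : U * Uᴴ = 1 := Unitary.mul_star_self_of_mem hH.eigenvectorUnitary.2
  have hdiag : Uᴴ * P * U - Uᴴ * Q * U = diagonal (RCLike.ofReal ∘ hH.eigenvalues) := by
    rw [← Matrix.sub_mul, ← Matrix.mul_sub, ← hPQ, ← hH.conjStarAlgAut_star_eigenvectorUnitary,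
      Unitary.conjStarAlgAut_apply, Unitary.coe_star, star_star]
    rfl
  have htrace : ∀ M : Matrix α α ℂ, (Uᴴ * M * U).trace = M.trace := fun M => by
    rw [trace_mul_cycle, hUU, one_mul]
  rw [traceNorm_eq_sum_abs_eigenvalues hH, ← htrace P, ← htrace Q, trace, trace,
    Complex.re_sum, Complex.re_sum, ← Finset.sum_add_distrib]
  refine Finset.sum_le_sum fun i _ => ?_
  have hPi := Complex.nonneg_iff.mp ((hP.conjTranspose_mul_mul_same U).diag_nonneg (i := i))
  have hQi := Complex.nonneg_iff.mp ((hQ.conjTranspose_mul_mul_same U).diag_nonneg (i := i))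
  have hdiag_i := congrArg Complex.re (congrFun (congrFun hdiag i) i)
  simp only [Matrix.sub_apply, Complex.sub_re, diagonal_apply_eq, Function.comp_apply] at hdiag_i
  change _ = hH.eigenvalues i at hdiag_i
  simp only [diag]
  rw [abs_le]
  constructor <;> linarith [hPi.1, hQi.1]

lemma traceNorm_map_le (Φ : Matrix α α ℂ →ₗ[ℂ] Matrix β β ℂ)
    (hpos : ∀ M, M.PosSemidef → (Φ M).PosSemidef) (htr : ∀ M, (Φ M).trace = M.trace)
    {H : Matrix α α ℂ} (hH : H.IsHermitian) : traceNorm (Φ H) ≤ traceNorm H := by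
  obtain ⟨P, Q, hP, hQ, rfl, hnorm⟩ := hH.exists_posSemidef_sub_eq_traceNorm
  rw [hnorm, ← htr P, ← htr Q, map_sub]
  exact traceNorm_le_trace_add_trace ((hpos P hP).1.sub (hpos Q hQ).1) (hpos P hP) (hpos Q hQ) rfl

end TraceNorm

section Choi

variable {α β : Type*} [Fintype α] [DecidableEq α]

def choiMatrix (S : Matrix α α ℂ →ₗ[ℂ] Matrix β β ℂ) : Matrix (α × β) (α × β) ℂ :=
  of fun p q => S (single p.1 q.1 1) p.2 q.2

lemma map_apply_eq_sum_choiMatrix (S : Matrix α α ℂ →ₗ[ℂ] Matrix β β ℂ) (X : Matrix α α ℂ)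
    (b b' : β) : S X b b' = ∑ a, ∑ a', X a a' * choiMatrix S (a, b) (a', b') := by
  conv_lhs => rw [matrix_eq_sum_single X]
  simp only [map_sum, Matrix.sum_apply]
  refine Finset.sum_congr rfl fun a _ => Finset.sum_congr rfl fun a' _ => ?_
  rw [show single a a' (X a a') = X a a' • single a a' 1 by rw [smul_single, smul_eq_mul, mul_one],
    map_smul, Matrix.smul_apply, smul_eq_mul]
  rfl

variable [Fintype β]

/-- `ω` is the maximally entangled vector `∑ₐ |a⟩|a⟩`, and `(S ⊗ id)(ω ω*)` is the Choi matrix. -/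
lemma IsCompletelyPositive.posSemidef_choiMatrix {S : Matrix α α ℂ →ₗ[ℂ] Matrix β β ℂ}
    (hS : IsCompletelyPositive S) : (choiMatrix S).PosSemidef := by
  let e := Fintype.equivFin α
  let ω : α × Fin (Fintype.card α) → ℂ := fun p => if e p.1 = p.2 then 1 else 0
  convert (hS _ _ (posSemidef_vecMulVec_self_star ω)).submatrix
    (fun p : α × β => (p.2, e p.1)) using 1
  ext p q
  simp only [choiMatrix, tensorIdMap, submatrix_apply, of_apply]
  refine congrArg (fun M => S M p.2 q.2) ?_
  ext a a'
  simp [ω, vecMulVec_apply, single_apply, e.apply_eq_iff_eq, eq_comm, ← ite_and, and_comm]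

open scoped MatrixOrder in
/-- Writing the Choi matrix as `Dᴴ D` gives the Kraus form `S X = ∑ₖ Wₖᴴ X Wₖ`,
`(Wₖ)_{ab} = D_{k,(a,b)}`. -/
lemma posSemidef_map_of_posSemidef_choiMatrix [DecidableEq β] {S : Matrix α α ℂ →ₗ[ℂ] Matrix β β ℂ}
    (hS : (choiMatrix S).PosSemidef) {X : Matrix α α ℂ} (hX : X.PosSemidef) :
    (S X).PosSemidef := by
  obtain ⟨D, hD⟩ := CStarAlgebra.nonneg_iff_eq_star_mul_self.mp hS.nonneg
  let W : α × β → Matrix α β ℂ := fun k => of fun a b => D k (a, b)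
  have hkraus : S X = ∑ k, (W k)ᴴ * X * W k := by
    ext b b'
    rw [map_apply_eq_sum_choiMatrix, hD]
    simp only [Matrix.sum_apply, mul_apply, star_apply, conjTranspose_apply, W, of_apply,
      Finset.mul_sum, Finset.sum_mul]
    conv_lhs => rw [Finset.sum_comm]
    conv_rhs => rw [Finset.sum_comm]
    refine Finset.sum_congr rfl fun a' _ => ?_
    rw [Finset.sum_comm]
    exact Finset.sum_congr rfl fun k _ => Finset.sum_congr rfl fun a _ => by ring
  rw [hkraus]
  exact posSemidef_sum _ fun k _ => hX.conjTranspose_mul_mul_same (W k)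

lemma posSemidef_hadamard_prod {ι n 𝕜 : Type*} [RCLike 𝕜] [Finite n] (s : Finset ι)
    (M : ι → Matrix n n 𝕜) (hM : ∀ i ∈ s, (M i).PosSemidef) :
    (of fun p q => ∏ i ∈ s, M i p q).PosSemidef := by
  classical
  induction s using Finset.induction_on with
  | empty => simpa [vecMulVec] using posSemidef_vecMulVec_self_star fun _ : n => (1 : 𝕜)
  | insert i s hi ih =>
    have := (hM i (Finset.mem_insert_self _ _)).hadamard
      (ih fun j hj => hM j (Finset.mem_insert_of_mem hj))
    simpa [Finset.prod_insert hi, hadamard] using this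

end Choi

lemma sum_prod_restrict_fiber {ι J β R : Type*} [Fintype ι] [DecidableEq ι] [Fintype J]
    [DecidableEq J] [Fintype β] [CommSemiring R] (κ : ι → J)
    (F : ∀ ν : J, ({i : ι // κ i = ν} → β) → R) :
    ∑ s : ι → β, ∏ ν, F ν (fun j => s j.1) = ∏ ν, ∑ t, F ν t := by
  rw [Finset.prod_univ_sum, Fintype.piFinset_univ]
  exact Fintype.sum_equiv
    { toFun := fun s ν j => s j.1
      invFun := fun p i => p (κ i) ⟨i, rfl⟩
      left_inv := fun s => rfl
      right_inv := fun p => by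
        funext ν ⟨i, hi⟩
        subst hi
        rfl } _ _ fun s => rfl

lemma restrict_fiber_eq_iff {ι J β : Type*} (κ : ι → J) {a b : ι → β} :
    (∀ ν, (fun j : {i // κ i = ν} => a j.1) = fun j => b j.1) ↔ a = b :=
  ⟨fun h => funext fun i => congrFun (h (κ i)) ⟨i, rfl⟩, fun h _ => h ▸ rfl⟩

section Assemble

variable {n w : ℕ}

lemma single_eq_assemble (f : Fin n → Fin w) (a a' : Fin n → Fin 2) :
    single a a' (1 : ℂ) =
      assemble f fun ν => single (fun j : {i // f i = ν} => a j.1) (fun j => a' j.1) 1 := by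
  ext x y
  simp only [assemble, single_apply, of_apply, Finset.prod_boole, Finset.mem_univ, true_implies,
    forall_and, restrict_fiber_eq_iff]

lemma trace_assemble (f : Fin n → Fin w) (M : ∀ ν : Fin w,
    Matrix ({i : Fin n // f i = ν} → Fin 2) ({i : Fin n // f i = ν} → Fin 2) ℂ) :
    (assemble f M).trace = ∏ ν, (M ν).trace :=
  sum_prod_restrict_fiber f fun ν t => M ν t t

end Assemble

section PartialTrace

open scoped Kronecker

variable {n : ℕ} (A : Finset (Fin n))

@[simp]
lemma glue_apply_coe_of_mem (x : A → Fin 2) (z : {i : Fin n // i ∉ A} → Fin 2) (j : A) :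
    glue A x z j = x j :=
  dif_pos j.2

@[simp]
lemma glue_apply_coe_of_notMem (x : A → Fin 2) (z : {i : Fin n // i ∉ A} → Fin 2)
    (j : {i : Fin n // i ∉ A}) : glue A x z j = z j :=
  dif_neg j.2

def glueEquiv : (A → Fin 2) × ({i : Fin n // i ∉ A} → Fin 2) ≃ (Fin n → Fin 2) where
  toFun p := glue A p.1 p.2
  invFun s := (fun j => s j, fun j => s j)
  left_inv p := by ext <;> simp
  right_inv s := funext fun i => by by_cases h : i ∈ A <;> simp [glue, h]

lemma sum_glue {M : Type*} [AddCommMonoid M] (F : (Fin n → Fin 2) → M) :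
    ∑ x : A → Fin 2, ∑ z : {i : Fin n // i ∉ A} → Fin 2, F (glue A x z) = ∑ s, F s := by
  rw [← (glueEquiv A).sum_comp, Fintype.sum_prod_type]
  rfl

lemma ptr_eq_sum_submatrix (X : QState n) :
    ptr A X = ∑ z : {i : Fin n // i ∉ A} → Fin 2,
      X.submatrix (fun x => glue A x z) (fun x => glue A x z) := by
  ext x y
  simp [ptr, Matrix.sum_apply]

lemma Matrix.PosSemidef.ptr {X : QState n} (hX : X.PosSemidef) : (ptr A X).PosSemidef := by
  rw [ptr_eq_sum_submatrix]
  exact posSemidef_sum _ fun z _ => hX.submatrix _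

lemma trace_ptr (X : QState n) : (ptr A X).trace = X.trace :=
  sum_glue A fun s => X s s

noncomputable def ptrLinearMap : QState n →ₗ[ℂ] Matrix (A → Fin 2) (A → Fin 2) ℂ where
  toFun := ptr A
  map_add' X Y := by ext; simp [ptr, Finset.sum_add_distrib]
  map_smul' c X := by ext; simp [ptr, Finset.mul_sum]

@[simp]
lemma ptrLinearMap_apply (X : QState n) : ptrLinearMap A X = ptr A X := rfl

/-- `μ ⊗ 𝟙/d`: the extension of a state `μ` on the qubits `B` by the maximally mixed state on
the other qubits. -/
noncomputable def extendMixed (B : Finset (Fin n)) :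
    Matrix (B → Fin 2) (B → Fin 2) ℂ →ₗ[ℂ] QState n where
  toFun μ := reindex (glueEquiv B) (glueEquiv B)
    (μ ⊗ₖ ((Fintype.card ({i : Fin n // i ∉ B} → Fin 2) : ℂ)⁻¹ • 1))
  map_add' μ ν := by ext; simp [add_kronecker]
  map_smul' c μ := by ext; simp [smul_kronecker]

variable {A}

lemma extendMixed_apply_glue (μ : Matrix (A → Fin 2) (A → Fin 2) ℂ) (x y : A → Fin 2)
    (z z' : {i : Fin n // i ∉ A} → Fin 2) :
    extendMixed A μ (glue A x z) (glue A y z') =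
      μ x y * ((Fintype.card ({i : Fin n // i ∉ A} → Fin 2) : ℂ)⁻¹ • (1 : Matrix _ _ ℂ)) z z' := by
  change (μ ⊗ₖ _) ((glueEquiv A).symm (glueEquiv A (x, z)))
    ((glueEquiv A).symm (glueEquiv A (y, z'))) = _
  simp only [Equiv.symm_apply_apply, kronecker_apply]

lemma ptr_extendMixed (μ : Matrix (A → Fin 2) (A → Fin 2) ℂ) : ptr A (extendMixed A μ) = μ := by
  ext x y
  simp only [ptr, of_apply, extendMixed_apply_glue, Matrix.smul_apply, one_apply_eq, smul_eq_mul,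
    mul_one, Finset.sum_const, Finset.card_univ, nsmul_eq_mul]
  field_simp

lemma trace_extendMixed (μ : Matrix (A → Fin 2) (A → Fin 2) ℂ) :
    (extendMixed A μ).trace = μ.trace := by
  rw [← trace_ptr A, ptr_extendMixed]

lemma Matrix.PosSemidef.extendMixed {μ : Matrix (A → Fin 2) (A → Fin 2) ℂ} (hμ : μ.PosSemidef) :
    (extendMixed A μ).PosSemidef :=
  (hμ.kronecker (PosSemidef.one.smul (by positivity))).submatrix _

variable (A)

lemma sum_mul_eq_sum_ptr_mul (X : QState n) (G : (Fin n → Fin 2) → (Fin n → Fin 2) → ℂ)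
    (H : (A → Fin 2) → (A → Fin 2) → ℂ)
    (hG : ∀ x z y z', G (glue A x z) (glue A y z') = if z = z' then H x y else 0) :
    ∑ a, ∑ a', X a a' * G a a' = ∑ x, ∑ y, ptr A X x y * H x y := by
  have hsplit : ∀ F : (Fin n → Fin 2) → (Fin n → Fin 2) → ℂ,
      ∑ a, ∑ a', F a a' = ∑ x, ∑ z, ∑ y, ∑ z', F (glue A x z) (glue A y z') := fun F => by
    simp only [sum_glue A]
    exact (sum_glue A fun a => ∑ a', F a a').symm
  simp only [hsplit, hG, mul_ite, mul_zero, Finset.sum_ite_eq, Finset.mem_univ, if_true, ptr,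
    of_apply, Finset.sum_mul]
  exact Finset.sum_congr rfl fun x _ => Finset.sum_comm

end PartialTrace

section TensorDecomposition

variable {N N' w : ℕ} {T : QState N →ₗ[ℂ] QState N'} {f : Fin N → Fin w} {g : Fin N' → Fin w}
  {Tb : ∀ ν : Fin w,
    Matrix ({i : Fin N // f i = ν} → Fin 2) ({i : Fin N // f i = ν} → Fin 2) ℂ →ₗ[ℂ]
      Matrix ({i : Fin N' // g i = ν} → Fin 2) ({i : Fin N' // g i = ν} → Fin 2) ℂ}

lemma map_single_eq_assemble (hdec : ∀ M, T (assemble f M) = assemble g fun ν => Tb ν (M ν))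
    (a a' : Fin N → Fin 2) :
    T (single a a' 1) =
      assemble g fun ν => Tb ν (single (fun j : {i // f i = ν} => a j.1) (fun j => a' j.1) 1) := by
  rw [single_eq_assemble f, hdec]

lemma trace_map_of_decomp (hdec : ∀ M, T (assemble f M) = assemble g fun ν => Tb ν (M ν))
    (htr : ∀ ν M, (Tb ν M).trace = M.trace) (X : QState N) : (T X).trace = X.trace := by
  induction X using Matrix.induction_on' with
  | h_zero => simp
  | h_add X Y hX hY => simp [hX, hY]
  | h_std_basis a a' c =>
    rw [← mul_one c, ← smul_eq_mul, ← smul_single, map_smul, trace_smul, trace_smul,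
      map_single_eq_assemble hdec, trace_assemble, single_eq_assemble f, trace_assemble]
    simp only [htr]

lemma choiMatrix_eq_prod (hdec : ∀ M, T (assemble f M) = assemble g fun ν => Tb ν (M ν)) :
    choiMatrix T = of fun p q => ∏ ν, choiMatrix (Tb ν)
      (fun j : {i // f i = ν} => p.1 j.1, fun j : {i // g i = ν} => p.2 j.1)
      (fun j => q.1 j.1, fun j => q.2 j.1) := by
  ext p q
  simp [choiMatrix, map_single_eq_assemble hdec, assemble]

lemma map_posSemidef_of_decomp (hdec : ∀ M, T (assemble f M) = assemble g fun ν => Tb ν (M ν))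
    (hcp : ∀ ν, IsCompletelyPositive (Tb ν)) {X : QState N} (hX : X.PosSemidef) :
    (T X).PosSemidef := by
  refine posSemidef_map_of_posSemidef_choiMatrix ?_ hX
  rw [choiMatrix_eq_prod hdec]
  exact posSemidef_hadamard_prod _ _ fun ν _ => (hcp ν).posSemidef_choiMatrix.submatrix _

end TensorDecomposition

section BlockPartialTrace

variable {n w : ℕ} (g : Fin n → Fin w) (A : Finset (Fin n))

def fiberGlue (ν : Fin w) (x : A → Fin 2) (t : {j : {i : Fin n // i ∉ A} // g j = ν} → Fin 2) :
    {i : Fin n // g i = ν} → Fin 2 :=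
  fun j => if h : j.1 ∈ A then x ⟨j.1, h⟩ else t ⟨⟨j.1, h⟩, j.2⟩

lemma ptr_assemble (M : ∀ ν : Fin w,
      Matrix ({i : Fin n // g i = ν} → Fin 2) ({i : Fin n // g i = ν} → Fin 2) ℂ)
    (x y : A → Fin 2) :
    ptr A (assemble g M) x y = ∏ ν, ∑ t, M ν (fiberGlue g A ν x t) (fiberGlue g A ν y t) :=
  sum_prod_restrict_fiber (fun i : {i : Fin n // i ∉ A} => g i) fun ν t =>
    M ν (fiberGlue g A ν x t) (fiberGlue g A ν y t)

lemma sum_fiberGlue_eq_trace {ν : Fin w} (hν : ν ∉ A.image g)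
    (M : Matrix ({i : Fin n // g i = ν} → Fin 2) ({i : Fin n // g i = ν} → Fin 2) ℂ)
    (x y : A → Fin 2) :
    ∑ t, M (fiberGlue g A ν x t) (fiberGlue g A ν y t) = M.trace := by
  have hA : ∀ j : {i // g i = ν}, j.1 ∉ A := fun j hj => hν (Finset.mem_image.mpr ⟨j.1, hj, j.2⟩)
  let e : ({j : {i : Fin n // i ∉ A} // g j = ν} → Fin 2) ≃ ({i : Fin n // g i = ν} → Fin 2) :=
    { toFun := fun t j => t ⟨⟨j.1, hA j⟩, j.2⟩
      invFun := fun s j => s ⟨j.1.1, j.2⟩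
      left_inv := fun _ => rfl
      right_inv := fun _ => rfl }
  have he : ∀ x t, fiberGlue g A ν x t = e t := fun x t => funext fun j => dif_neg (hA j)
  simp only [he]
  exact e.sum_comp fun s => M s s

end BlockPartialTrace

section Lightcone

variable {N N' w : ℕ} {T : QState N →ₗ[ℂ] QState N'} {f : Fin N → Fin w} {g : Fin N' → Fin w}
  {Tb : ∀ ν : Fin w,
    Matrix ({i : Fin N // f i = ν} → Fin 2) ({i : Fin N // f i = ν} → Fin 2) ℂ →ₗ[ℂ]
      Matrix ({i : Fin N' // g i = ν} → Fin 2) ({i : Fin N' // g i = ν} → Fin 2) ℂ}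
  {A : Finset (Fin N')}

/-- The set `B = ⋃_{ν ∈ Γ} K_ν`. -/
def backwardLightcone (f : Fin N → Fin w) (g : Fin N' → Fin w) (A : Finset (Fin N')) :
    Finset (Fin N) :=
  Finset.univ.filter fun i => f i ∈ A.image g

lemma mem_backwardLightcone {i : Fin N} : i ∈ backwardLightcone f g A ↔ f i ∈ A.image g := by
  simp [backwardLightcone]

lemma choiMatrix_ptr_comp_apply (hdec : ∀ M, T (assemble f M) = assemble g fun ν => Tb ν (M ν))
    (a a' : Fin N → Fin 2) (x y : A → Fin 2) :
    choiMatrix (ptrLinearMap A ∘ₗ T) (a, x) (a', y) = ∏ ν, ∑ t,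
      Tb ν (single (fun j : {i // f i = ν} => a j.1) (fun j => a' j.1) 1)
        (fiberGlue g A ν x t) (fiberGlue g A ν y t) := by
  simp only [choiMatrix, of_apply, LinearMap.comp_apply, ptrLinearMap_apply,
    map_single_eq_assemble hdec, ptr_assemble]

lemma sum_fiberGlue_map_single_of_notMem (htr : ∀ ν M, (Tb ν M).trace = M.trace) {ν : Fin w}
    (hν : ν ∉ A.image g) (p p' : {i // f i = ν} → Fin 2) (x y : A → Fin 2) :
    ∑ t, Tb ν (single p p' 1) (fiberGlue g A ν x t) (fiberGlue g A ν y t) =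
      if p = p' then 1 else 0 := by
  rw [sum_fiberGlue_eq_trace g A hν, htr]
  split_ifs with h
  · rw [h, trace_single_eq_same]
  · exact trace_single_eq_of_ne _ _ _ h

/-- A block with an input outside the lightcone feeds only traced-out qubits, and `T_ν` preserves
traces. -/
lemma choiMatrix_ptr_comp_apply_glue (hdec : ∀ M, T (assemble f M) = assemble g fun ν => Tb ν (M ν))
    (htr : ∀ ν M, (Tb ν M).trace = M.trace) (x y : A → Fin 2)
    (u : backwardLightcone f g A → Fin 2) (ζ : {i // i ∉ backwardLightcone f g A} → Fin 2)
    (u' : backwardLightcone f g A → Fin 2) (ζ' : {i // i ∉ backwardLightcone f g A} → Fin 2) :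
    choiMatrix (ptrLinearMap A ∘ₗ T) (glue _ u ζ, x) (glue _ u' ζ', y) =
      if ζ = ζ' then choiMatrix (ptrLinearMap A ∘ₗ T) (glue _ u 0, x) (glue _ u' 0, y) else 0 := by
  have hin : ∀ ν ∈ A.image g, ∀ (v : backwardLightcone f g A → Fin 2) z,
      (fun j : {i // f i = ν} => glue _ v z j.1) = fun j => glue _ v 0 j.1 := by
    intro ν hν v z
    funext j
    have hj : j.1 ∈ backwardLightcone f g A := mem_backwardLightcone.mpr (by rw [j.2]; exact hν)
    simp [glue, hj]
  rw [choiMatrix_ptr_comp_apply hdec, choiMatrix_ptr_comp_apply hdec]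
  split_ifs with hζ
  · subst hζ
    refine Finset.prod_congr rfl fun ν _ => ?_
    by_cases hν : ν ∈ A.image g
    · rw [hin ν hν u, hin ν hν u']
    · have hj : ∀ j : {i // f i = ν}, j.1 ∉ backwardLightcone f g A :=
        fun j h => hν (j.2 ▸ mem_backwardLightcone.mp h)
      rw [sum_fiberGlue_map_single_of_notMem htr hν, sum_fiberGlue_map_single_of_notMem htr hν,
        if_pos, if_pos] <;> funext j <;> simp [glue, hj j]
  · obtain ⟨i, hi⟩ := Function.ne_iff.mp hζ
    have hν : f i ∉ A.image g := fun h => i.2 (mem_backwardLightcone.mpr h)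
    refine Finset.prod_eq_zero (Finset.mem_univ (f i)) ?_
    rw [sum_fiberGlue_map_single_of_notMem htr hν, if_neg]
    intro h
    exact hi (by simpa using congrFun h ⟨i, rfl⟩)

lemma ptr_map_extendMixed_ptr (hdec : ∀ M, T (assemble f M) = assemble g fun ν => Tb ν (M ν))
    (htr : ∀ ν M, (Tb ν M).trace = M.trace) (X : QState N) :
    ptr A (T (extendMixed _ (ptr (backwardLightcone f g A) X))) = ptr A (T X) := by
  ext x y
  have hpair := fun Y => sum_mul_eq_sum_ptr_mul (backwardLightcone f g A) Y
    (fun a a' => choiMatrix (ptrLinearMap A ∘ₗ T) (a, x) (a', y))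
    (fun u u' => choiMatrix (ptrLinearMap A ∘ₗ T) (glue _ u 0, x) (glue _ u' 0, y))
    (choiMatrix_ptr_comp_apply_glue hdec htr x y)
  have hchoi := map_apply_eq_sum_choiMatrix (ptrLinearMap A ∘ₗ T)
  simp only [LinearMap.comp_apply, ptrLinearMap_apply] at hchoi
  rw [hchoi, hchoi, hpair, hpair, ptr_extendMixed]

end Lightcone

/-- Let `T = ⊗_ν T_ν` be a tensor product of quantum operations with respect to the
partitions of the input qubits `[N]` into the fibers `K_ν` of `f` and of the output qubits
`[N']` into the fibers `L_ν` of `g`. For `A ⊆ [N']`, let `Γ = {ν : L_ν ∩ A ≠ ∅}` and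
`B = ∪_{ν ∈ Γ} K_ν` (below: `B = {i : f i ∈ g(A)}`). Then for all density matrices `ρ, σ`:
`D(T(ρ)|_A, T(σ)|_A) ≤ D(ρ|_B, σ|_B)`. -/
theorem traceDist_ptr_tensor_le {N N' w : ℕ} (T : QState N →ₗ[ℂ] QState N')
    (f : Fin N → Fin w) (g : Fin N' → Fin w)
    (Tb : ∀ ν : Fin w,
      Matrix ({i : Fin N // f i = ν} → Fin 2) ({i : Fin N // f i = ν} → Fin 2) ℂ →ₗ[ℂ]
        Matrix ({i : Fin N' // g i = ν} → Fin 2) ({i : Fin N' // g i = ν} → Fin 2) ℂ)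
    (hTb : ∀ ν, IsQuantumOp (Tb ν))
    (hdec : ∀ M, T (assemble f M) = assemble g fun ν => Tb ν (M ν))
    (A : Finset (Fin N')) (ρ σ : QState N)
    (hρ : IsDensityMatrix ρ) (hσ : IsDensityMatrix σ) :
    traceDist (ptr A (T ρ)) (ptr A (T σ)) ≤
      traceDist (ptr (Finset.univ.filter fun i => f i ∈ A.image g) ρ)
        (ptr (Finset.univ.filter fun i => f i ∈ A.image g) σ) := by
  change _ ≤ traceDist (ptr (backwardLightcone f g A) ρ) (ptr (backwardLightcone f g A) σ)
  set B := backwardLightcone f g A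
  let Φ := ptrLinearMap A ∘ₗ T ∘ₗ extendMixed B
  have hΦ : ∀ X, Φ (ptr B X) = ptr A (T X) := ptr_map_extendMixed_ptr hdec fun ν => (hTb ν).1
  have hpos : ∀ M, M.PosSemidef → (Φ M).PosSemidef := fun M hM =>
    (map_posSemidef_of_decomp hdec (fun ν => (hTb ν).2) hM.extendMixed).ptr A
  have htr : ∀ M, (Φ M).trace = M.trace := fun M => by
    simp [Φ, trace_ptr, trace_map_of_decomp hdec fun ν => (hTb ν).1, trace_extendMixed]
  have hherm := (hρ.1.ptr B).isHermitian.sub (hσ.1.ptr B).isHermitian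
  rw [traceDist, traceDist, ← hΦ, ← hΦ, ← map_sub]
  gcongr
  exact traceNorm_map_le Φ hpos htr hherm
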